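/- For every binary string β of length n with t ones and q ≥ 3, the expansion ε(β), obtained by replacing the t ones of β successively by the t symbols of each string of the Gray code G(t,q-1)⊕1 over {1,...,q-1}, is a Gray code list: consecutive strings of ε(β) have Hamming distance exactly 1. -/

import Mathlib

/-- Hamming distance between two (equal-length) strings. -/
def hamming {α : Type*} [DecidableEq α] (u v : List α) : ℕ :=
  (List.zip u v).countP (fun p => decide (p.1 ≠ p.2))

/-- The generalized reflected Gray code over the alphabet `{0,...,q-1} ⊆ ℕ`. -/
def grayN (q : ℕ) : ℕ → List (List ℕ)
  | 0 => [[]]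
  | n+1 => ((List.range q).map (fun i =>
      (if i % 2 = 0 then grayN q n else (grayN q n).reverse).map (fun w => i :: w))).flatten

/-- Replace the ones of a binary string, from left to right, by the symbols of `x`
(zeros stay in place). -/
def place : List ℕ → List ℕ → List ℕ
  | [], _ => []
  | b :: β, x => if b = 0 then 0 :: place β x else x.headD 1 :: place β x.tail

/-- The expansion `ε(β)` of a binary string `β` for the alphabet `{0,...,q-1}`:
the `i`-th element replaces the ones of `β`, left to right, by the symbols of the
`i`-th string of `G(t,q-1) ⊕ 1` (the reflected Gray code over `{1,...,q-1}`). -/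
def expansion (q : ℕ) (β : List ℕ) : List (List ℕ) :=
  ((grayN (q-1) (β.count 1)).map (fun w => w.map (· + 1))).map (place β)

/-!
Under `place β`, two strings whose length is the number of ones of `β` are at the same Hamming
distance as the strings themselves, since the zeros of `β` contribute equal symbols; shifting
every symbol by one is injective and changes no distance either. So `ε(β)` inherits the Gray
property from `G(t, q-1)`. That property holds by induction on `t`: inside a block the strings
share their first symbol and the tail is `G(t-1, q-1)` or its reversal, and at the junction of
blocks `i` and `i+1` the two tails agree (the reflection), so only the first symbol changes.
-/

section Hamming

variable {α γ : Type*} [DecidableEq α] [DecidableEq γ]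

lemma hamming_cons (a b : α) (u v : List α) :
    hamming (a :: u) (b :: v) = hamming u v + if a = b then 0 else 1 := by
  by_cases h : a = b <;> simp [hamming, h]

lemma hamming_self (u : List α) : hamming u u = 0 := by
  induction u with
  | nil => rfl
  | cons a u ih => simp [hamming_cons, ih]

lemma hamming_comm (u v : List α) : hamming u v = hamming v u := by
  rw [hamming, hamming, ← List.zip_swap, List.countP_map]
  simp [Function.comp_def, eq_comm]

lemma hamming_map_of_injective {f : α → γ} (hf : Function.Injective f) (u v : List α) :
    hamming (u.map f) (v.map f) = hamming u v := by
  rw [hamming, hamming, List.zip_map, List.countP_map]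
  simp [Function.comp_def, hf.eq_iff]

end Hamming

lemma getLast?_reflect_eq_head?_reflect {α : Type*} (l : List α) (m : ℕ) :
    (if m % 2 = 0 then l else l.reverse).getLast? =
      (if (m + 1) % 2 = 0 then l else l.reverse).head? := by
  rcases Nat.mod_two_eq_zero_or_one m with h | h
  · simp [h, Nat.succ_mod_two_eq_one_iff.mpr h]
  · simp [h, Nat.succ_mod_two_eq_zero_iff.mpr h]

lemma length_of_mem_grayN {q n : ℕ} {w : List ℕ} (hw : w ∈ grayN q n) : w.length = n := by
  induction n generalizing w with
  | zero => simp_all [grayN]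
  | succ n ih =>
    simp only [grayN, List.mem_flatten, List.mem_map, List.mem_range] at hw
    obtain ⟨_, ⟨i, -, rfl⟩, hw⟩ := hw
    obtain ⟨w', hw', rfl⟩ := List.mem_map.mp hw
    split at hw' <;> simp_all

lemma grayN_ne_nil {q : ℕ} (hq : 0 < q) (n : ℕ) : grayN q n ≠ [] := by
  induction n with
  | zero => simp [grayN]
  | succ n ih =>
    simp only [grayN, ne_eq, List.flatten_eq_nil_iff, List.forall_mem_map, List.mem_range]
    intro h
    simpa [ih] using h 0 hq

lemma isChain_grayN (q n : ℕ) : (grayN q n).IsChain (fun u v => hamming u v = 1) := by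
  induction n with
  | zero => simp [grayN]
  | succ n ih =>
    have hblocks : [] ∉ (List.range q).map (fun i =>
        (if i % 2 = 0 then grayN q n else (grayN q n).reverse).map (fun w => i :: w)) := by
      simp only [List.mem_map, List.mem_range, not_exists, not_and]
      intro i hi h
      have := grayN_ne_nil (Nat.zero_lt_of_lt hi) n
      split at h <;> simp_all
    rw [grayN, List.isChain_flatten hblocks]
    constructor
    · simp only [List.mem_map, List.mem_range, forall_exists_index, and_imp]
      rintro _ i - rfl
      rw [List.isChain_map]
      split
      · simpa [hamming_cons] using ih
      · simpa [List.isChain_reverse, hamming_cons, hamming_comm] using ih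
    · rw [List.isChain_map]
      rcases Nat.eq_zero_or_pos q with rfl | hq
      · simp
      obtain ⟨k, rfl⟩ := Nat.exists_eq_add_of_lt hq
      rw [zero_add, List.isChain_range_succ]
      intro m _ x hx y hy
      rw [List.getLast?_map, getLast?_reflect_eq_head?_reflect, Option.mem_map] at hx
      rw [List.head?_map, Option.mem_map] at hy
      obtain ⟨w, hw, rfl⟩ := hx
      obtain ⟨w', hw', rfl⟩ := hy
      obtain rfl : w = w' := Option.some_injective _ (hw.symm.trans hw')
      simp [hamming_cons, hamming_self]

lemma hamming_place {β : List ℕ} (hβ : ∀ b ∈ β, b ≤ 1) {x y : List ℕ}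
    (hxy : x.length = y.length) :
    hamming (place β x) (place β y) = hamming (x.take (β.count 1)) (y.take (β.count 1)) := by
  induction β generalizing x y with
  | nil => simp [place, hamming]
  | cons b β ih =>
    have ih' := @ih (fun b hb => hβ b (List.mem_cons_of_mem _ hb))
    obtain rfl | rfl : b = 0 ∨ b = 1 := by have := hβ b List.mem_cons_self; omega
    · simp [place, hamming_cons, ih' hxy]
    · match x, y, hxy with
      | [], [], _ => simp [place, hamming_self]
      | a :: x, c :: y, hxy => simp_all [place, hamming_cons]

theorem stmt8_general (q : ℕ) (β : List ℕ) (hβ : ∀ b ∈ β, b ≤ 1) :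
    List.Chain' (fun u v => hamming u v = 1) (expansion q β) := by
  rw [expansion, List.map_map]
  refine (List.isChain_map _).2 <|
    (isChain_grayN (q - 1) (β.count 1)).imp_of_mem_imp fun w w' hw hw' h => ?_
  have hlen : (w.map (· + 1)).length = β.count 1 := by simp [length_of_mem_grayN hw]
  have hlen' : (w'.map (· + 1)).length = β.count 1 := by simp [length_of_mem_grayN hw']
  simp only [Function.comp_apply]
  rw [hamming_place hβ (hlen.trans hlen'.symm), List.take_of_length_le hlen.le,
    List.take_of_length_le hlen'.le, hamming_map_of_injective (add_left_injective 1), h]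

/-- For `q ≥ 3` and a binary string `β`, the expansion `ε(β)` is a Gray code list:
consecutive strings of `ε(β)` have Hamming distance exactly `1`. -/
theorem stmt8 (q : ℕ) (hq : 3 ≤ q) (β : List ℕ) (hβ : ∀ b ∈ β, b ≤ 1) :
    List.Chain' (fun u v => hamming u v = 1) (expansion q β) :=
  stmt8_general q β hβ
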